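/- Let n ≥ 1 and μ > −1/2. Then ∫_{ℝⁿ} exp(−Σᵢ₌₁ⁿ λᵢ²)·∏ᵢ₌₁ⁿ |λᵢ|^{2μ}·∏_{1≤i<j≤n} (λᵢ−λⱼ)² dλ₁…dλₙ = n!·∏_{k=0}^{n−1} γ_μ(k), where γ_μ(2m) = m!·Γ(m + μ + 1/2) and γ_μ(2m+1) = m!·Γ(m + μ + 3/2). -/

import Mathlib

/-!
With `w(t) = |t|^{2μ} e^{-t²}`, the integrand is `det (w(x_j) x_j^i) · det (x_j^i)`, so
Andréief's identity turns the integral into `n!` times the Hankel determinant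
`det (m_{i+j})` of the moments `m_k = ∫ w(t) t^k dt`. The odd moments vanish and
`m_{2k} = Γ(k + μ + 1/2)`; listing even indices before odd ones makes the Hankel matrix block
diagonal, with blocks `(Γ(i + j + a))` for `a = μ + 1/2` and `a = μ + 3/2`. Finally
`Γ(i + j + a) = Γ(j + a) · (j + a)^{(i)}` with the monic rising-factorial polynomials `x^{(i)}`
of degree `i`, so the remaining determinant is the Vandermonde determinant at the points `j + a`,
namely `∏_{i < j} (j - i) = ∏_{k < n} k!`.
-/

open MeasureTheory Real Filter Topology

/-- `γ_μ(2m) = m!·Γ(m + μ + 1/2)` and `γ_μ(2m+1) = m!·Γ(m + μ + 3/2)`. -/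
noncomputable def gam (μ : ℝ) (k : ℕ) : ℝ :=
  if k % 2 = 0 then (Nat.factorial (k / 2) : ℝ) * Real.Gamma ((k / 2 : ℕ) + μ + 1 / 2)
  else (Nat.factorial (k / 2) : ℝ) * Real.Gamma ((k / 2 : ℕ) + μ + 3 / 2)

open Finset Matrix Equiv

theorem Matrix.sum_sign_mul_sign_mul_prod_eq_det {ι R : Type*} [Fintype ι] [DecidableEq ι]
    [CommRing R] (N : Matrix ι ι R) (σ : Perm ι) :
    ∑ τ : Perm ι, ((Perm.sign σ : ℤ) : R) * (Perm.sign τ : ℤ) * ∏ i, N (σ i) (τ i) = N.det := by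
  have hsign : ((Perm.sign σ : ℤ) : R) * (Perm.sign σ : ℤ) = 1 := by
    rw [← Int.cast_mul, ← Units.val_mul, Int.units_mul_self, Units.val_one, Int.cast_one]
  have hrows : ∑ τ : Perm ι, ((Perm.sign τ : ℤ) : R) * ∏ i, N (σ i) (τ i) =
      (Perm.sign σ : ℤ) * N.det := by
    rw [← det_permute, ← det_transpose, det_apply']
    rfl
  simp_rw [mul_assoc, ← mul_sum, hrows, ← mul_assoc, hsign, one_mul]

/-- Andréief's identity. -/
theorem integral_det_mul_det {ι α 𝕜 : Type*} [Fintype ι] [DecidableEq ι] [RCLike 𝕜]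
    [MeasurableSpace α] {ν : Measure α} [SigmaFinite ν] (f g : ι → α → 𝕜)
    (hfg : ∀ i j, Integrable (fun t => f i t * g j t) ν) :
    ∫ x, (of fun i j => f i (x j)).det * (of fun i j => g i (x j)).det ∂(Measure.pi fun _ => ν) =
      (Fintype.card ι).factorial * (of fun i j => ∫ t, f i t * g j t ∂ν).det := by
  have hexpand : ∀ x : ι → α, (of fun i j => f i (x j)).det * (of fun i j => g i (x j)).det =
      ∑ σ : Perm ι, ∑ τ : Perm ι, ((Perm.sign σ : ℤ) : 𝕜) * (Perm.sign τ : ℤ) *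
        ∏ i, f (σ i) (x i) * g (τ i) (x i) := by
    intro x
    simp only [det_apply', of_apply, sum_mul_sum, prod_mul_distrib]
    exact sum_congr rfl fun σ _ => sum_congr rfl fun τ _ => by ring
  have hint : ∀ σ τ : Perm ι, Integrable (fun x : ι → α => ((Perm.sign σ : ℤ) : 𝕜) *
      (Perm.sign τ : ℤ) * ∏ i, f (σ i) (x i) * g (τ i) (x i)) (Measure.pi fun _ => ν) :=
    fun σ τ => (Integrable.fintype_prod fun i => hfg (σ i) (τ i)).const_mul _
  calc _ = ∑ σ : Perm ι, ∑ τ : Perm ι, ((Perm.sign σ : ℤ) : 𝕜) * (Perm.sign τ : ℤ) *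
        ∏ i, ∫ t, f (σ i) t * g (τ i) t ∂ν := by
        simp_rw [hexpand]
        rw [integral_finsetSum _ fun σ _ => integrable_finsetSum _ fun τ _ => hint σ τ]
        refine sum_congr rfl fun σ _ => ?_
        rw [integral_finsetSum _ fun τ _ => hint σ τ]
        refine sum_congr rfl fun τ _ => ?_
        rw [integral_const_mul, integral_fintype_prod_eq_prod fun i t => f (σ i) t * g (τ i) t]
    _ = ∑ _σ : Perm ι, (of fun i j => ∫ t, f i t * g j t ∂ν).det :=
        sum_congr rfl fun σ _ => by
          simpa only [of_apply] using
            sum_sign_mul_sign_mul_prod_eq_det (of fun i j => ∫ t, f i t * g j t ∂ν) σ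
    _ = _ := by simp [Fintype.card_perm]

noncomputable def finEvenOddEquiv (n : ℕ) : Fin ((n + 1) / 2) ⊕ Fin (n / 2) ≃ Fin n :=
  Equiv.ofBijective
    (Sum.elim (fun i => ⟨2 * i, by omega⟩) (fun i => ⟨2 * i + 1, by omega⟩)) <| by
    rw [Fintype.bijective_iff_injective_and_card]
    refine ⟨?_, by simp only [Fintype.card_sum, Fintype.card_fin]; omega⟩
    rintro (i | i) (j | j) h <;> simp only [Sum.elim_inl, Sum.elim_inr, Fin.mk.injEq] at h
    all_goals first | omega | (congr 1; ext; omega)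

@[simp] theorem finEvenOddEquiv_inl {n : ℕ} (i : Fin ((n + 1) / 2)) :
    (finEvenOddEquiv n (.inl i) : ℕ) = 2 * i := rfl

@[simp] theorem finEvenOddEquiv_inr {n : ℕ} (i : Fin (n / 2)) :
    (finEvenOddEquiv n (.inr i) : ℕ) = 2 * i + 1 := rfl

theorem Matrix.det_hankel_of_odd_eq_zero {R : Type*} [CommRing R] (m : ℕ → R)
    (hm : ∀ k, m (2 * k + 1) = 0) (n : ℕ) :
    (of fun i j : Fin n => m (i + j)).det =
      (of fun i j : Fin ((n + 1) / 2) => m (2 * (i + j))).det *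
        (of fun i j : Fin (n / 2) => m (2 * (i + j) + 2)).det := by
  rw [← det_submatrix_equiv_self (finEvenOddEquiv n), ← det_fromBlocks_zero₂₁ _ 0]
  congr 1
  ext (i | i) (j | j) <;> simp only [submatrix_apply, of_apply, fromBlocks_apply₁₁,
    fromBlocks_apply₁₂, fromBlocks_apply₂₁, fromBlocks_apply₂₂, zero_apply, finEvenOddEquiv_inl,
    finEvenOddEquiv_inr]
  · ring_nf
  · rw [← hm (i + j)]; ring_nf
  · rw [← hm (i + j)]; ring_nf
  · ring_nf

theorem Finset.prod_range_eq_prod_even_mul_prod_odd {M : Type*} [CommMonoid M] (f : ℕ → M)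
    (n : ℕ) :
    ∏ k ∈ range n, f k =
      (∏ k ∈ range ((n + 1) / 2), f (2 * k)) * ∏ k ∈ range (n / 2), f (2 * k + 1) := by
  have htwo : ∀ m, ∏ k ∈ range (2 * m), f k =
      (∏ k ∈ range m, f (2 * k)) * ∏ k ∈ range m, f (2 * k + 1) := by
    intro m
    induction m with
    | zero => simp
    | succ m ih =>
      rw [mul_add_one, prod_range_succ, prod_range_succ, ih, prod_range_succ, prod_range_succ,
        mul_mul_mul_comm, mul_assoc]
  obtain ⟨m, rfl | rfl⟩ := Nat.even_or_odd' n
  · rw [htwo, show (2 * m + 1) / 2 = m by omega, show 2 * m / 2 = m by omega]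
  · rw [prod_range_succ, htwo, show (2 * m + 1 + 1) / 2 = m + 1 by omega,
      show (2 * m + 1) / 2 = m by omega, prod_range_succ, mul_right_comm]

theorem Real.Gamma_add_nat_eq_mul_eval_ascPochhammer {x : ℝ} (hx : ∀ k : ℕ, x + k ≠ 0)
    (n : ℕ) : Gamma (x + n) = Gamma x * (ascPochhammer ℝ n).eval x := by
  induction n with
  | zero => simp
  | succ n ih =>
    rw [Nat.cast_succ, ← add_assoc, Gamma_add_one (hx n), ih, ascPochhammer_succ_eval]
    ring

theorem Matrix.det_vandermonde_natCast_add (n : ℕ) (a : ℝ) :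
    (vandermonde fun i : Fin n => ((i : ℕ) : ℝ) + a).det = ∏ k ∈ range n, (k.factorial : ℝ) := by
  rw [det_vandermonde_add]
  cases n with
  | zero => simp
  | succ n =>
    rw [det_vandermonde_id_eq_superFactorial, ← Nat.prod_range_succ_factorial]
    push_cast
    rfl

theorem Matrix.det_Gamma_hankel (n : ℕ) {a : ℝ} (ha : ∀ k : ℕ, a + k ≠ 0) :
    (of fun i j : Fin n => Gamma ((i + j : ℕ) + a)).det =
      ∏ k ∈ range n, k.factorial * Gamma (k + a) := by
  set v : Fin n → ℝ := fun j => (j : ℕ) + a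
  have hv : ∀ (j : Fin n) (k : ℕ), v j + k ≠ 0 := fun j k => by
    simpa only [v, add_comm, add_left_comm, Nat.cast_add] using ha (j + k)
  have hentry : (of fun i j : Fin n => Gamma ((i + j : ℕ) + a)) =
      of fun i j => Gamma (v j) * (of fun (i j : Fin n) => (ascPochhammer ℝ i).eval (v j)) i j := by
    ext i j
    rw [of_apply, of_apply, of_apply, ← Gamma_add_nat_eq_mul_eval_ascPochhammer (hv j),
      add_comm (v j), Nat.cast_add, add_assoc]
  have hpoch :
      (of fun i j : Fin n => (ascPochhammer ℝ i).eval (v j)).det = (vandermonde v).det := by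
    rw [det_eval_matrixOfPolynomials_eq_det_vandermonde _ _
      (fun i => ascPochhammer_natDegree ℝ i) (fun i => monic_ascPochhammer ℝ i), ← det_transpose]
    rfl
  rw [hentry, det_mul_row, hpoch, det_vandermonde_natCast_add, prod_mul_distrib, mul_comm,
    ← Fin.prod_univ_eq_prod_range (fun k => Gamma (k + a))]

theorem integrable_comp_abs_of_integrableOn_Ioi {f : ℝ → ℝ} (hf : IntegrableOn f (Set.Ioi 0)) :
    Integrable fun x => f |x| := by
  have hIoi : IntegrableOn (fun x => f |x|) (Set.Ioi 0) :=
    hf.congr_fun (fun x hx => by rw [abs_of_pos hx]) measurableSet_Ioi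
  have hIic : IntegrableOn (fun x => f |x|) (Set.Iic 0) := by
    rw [← (Measure.measurePreserving_neg volume).integrableOn_comp_preimage
      (Homeomorph.neg ℝ).measurableEmbedding]
    simp only [Function.comp_def, abs_neg, Set.neg_preimage, Set.neg_Iic, neg_zero]
    exact Iff.mpr integrableOn_Ici_iff_integrableOn_Ioi hIoi
  rw [← integrableOn_univ, ← Set.Iic_union_Ioi (a := (0 : ℝ)), integrableOn_union]
  exact ⟨hIic, hIoi⟩

noncomputable def genHermiteWeight (μ t : ℝ) : ℝ := |t| ^ (2 * μ) * exp (-t ^ 2)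

section genHermiteWeight

variable {μ : ℝ}

theorem genHermiteWeight_mul_abs_pow_of_ne_zero {t : ℝ} (ht : t ≠ 0) (k : ℕ) :
    genHermiteWeight μ t * |t| ^ k = |t| ^ (2 * μ + k) * exp (-|t| ^ 2) := by
  rw [genHermiteWeight, rpow_add (abs_pos.mpr ht), rpow_natCast, sq_abs]
  ring

theorem integrable_genHermiteWeight_mul_pow (hμ : -(1 / 2) < μ) (k : ℕ) :
    Integrable fun t => genHermiteWeight μ t * t ^ k := by
  have hdom : Integrable fun t : ℝ => |t| ^ (2 * μ + k) * exp (-|t| ^ 2) := by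
    refine integrable_comp_abs_of_integrableOn_Ioi
      (f := fun y => y ^ (2 * μ + k) * exp (-y ^ 2)) ?_
    simpa only [neg_one_mul] using integrableOn_rpow_mul_exp_neg_mul_sq one_pos
      (s := 2 * μ + k) (by linarith [k.cast_nonneg (α := ℝ)])
  refine hdom.mono' ?_ ?_
  · unfold genHermiteWeight
    fun_prop
  · filter_upwards [volume.ae_ne 0] with t ht
    simp only [norm_mul, norm_pow, Real.norm_eq_abs]
    rw [abs_of_nonneg (by unfold genHermiteWeight; positivity),
      genHermiteWeight_mul_abs_pow_of_ne_zero ht]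

theorem integral_genHermiteWeight_mul_pow_two_mul (hμ : -(1 / 2) < μ) (m : ℕ) :
    ∫ t, genHermiteWeight μ t * t ^ (2 * m) = Gamma (m + μ + 1 / 2) := by
  have hq : -1 < 2 * μ + (2 * m : ℕ) := by linarith [(2 * m).cast_nonneg (α := ℝ)]
  calc ∫ t, genHermiteWeight μ t * t ^ (2 * m)
      = ∫ t, (fun y => y ^ (2 * μ + (2 * m : ℕ)) * exp (-y ^ (2 : ℝ))) |t| := by
        refine integral_congr_ae ?_
        filter_upwards [volume.ae_ne 0] with t ht
        rw [rpow_two, ← genHermiteWeight_mul_abs_pow_of_ne_zero ht, Even.pow_abs ⟨m, two_mul m⟩]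
    _ = Gamma (m + μ + 1 / 2) := by
        rw [integral_comp_abs (f := fun y => y ^ (2 * μ + (2 * m : ℕ)) * exp (-y ^ (2 : ℝ))),
          integral_rpow_mul_exp_neg_rpow two_pos hq]
        push_cast
        ring_nf

theorem integral_genHermiteWeight_mul_pow_two_mul_add_one (m : ℕ) :
    ∫ t, genHermiteWeight μ t * t ^ (2 * m + 1) = 0 := by
  have hodd : ∀ t, genHermiteWeight μ (-t) * (-t) ^ (2 * m + 1) =
      -(genHermiteWeight μ t * t ^ (2 * m + 1)) := by
    intro t
    rw [genHermiteWeight, genHermiteWeight, abs_neg, neg_sq, Odd.neg_pow ⟨m, rfl⟩, mul_neg]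
  have hneg := integral_neg_eq_self (fun t => genHermiteWeight μ t * t ^ (2 * m + 1)) volume
  simp only [hodd, integral_neg] at hneg
  linarith

end genHermiteWeight

theorem gam_two_mul (μ : ℝ) (k : ℕ) :
    gam μ (2 * k) = k.factorial * Gamma (k + (μ + 1 / 2)) := by
  rw [gam, if_pos (by omega), show 2 * k / 2 = k by omega, add_assoc]

theorem gam_two_mul_add_one (μ : ℝ) (k : ℕ) :
    gam μ (2 * k + 1) = k.factorial * Gamma (k + (μ + 3 / 2)) := by
  rw [gam, if_neg (by omega), show (2 * k + 1) / 2 = k by omega, add_assoc]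

theorem det_hankel_integral_genHermiteWeight_mul_pow {μ : ℝ} (hμ : -(1 / 2) < μ) (n : ℕ) :
    (of fun i j : Fin n => ∫ t, genHermiteWeight μ t * t ^ (i + j : ℕ)).det =
      ∏ k ∈ range n, gam μ k := by
  have hpos : ∀ a : ℝ, 1 / 2 ≤ a → ∀ k : ℕ, μ + a + k ≠ 0 := fun a ha k =>
    (by linarith [k.cast_nonneg (α := ℝ)] : 0 < μ + a + k).ne'
  have hodd : ∀ k : ℕ, Gamma ((k + 1 : ℕ) + μ + 1 / 2) = Gamma (k + (μ + 3 / 2)) := fun k => by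
    push_cast
    ring_nf
  rw [det_hankel_of_odd_eq_zero (fun k => ∫ t, genHermiteWeight μ t * t ^ k)
    integral_genHermiteWeight_mul_pow_two_mul_add_one]
  simp_rw [← mul_add_one 2, integral_genHermiteWeight_mul_pow_two_mul hμ, hodd, add_assoc]
  rw [det_Gamma_hankel _ (hpos _ le_rfl), det_Gamma_hankel _ (hpos _ (by norm_num)),
    prod_range_eq_prod_even_mul_prod_odd (gam μ)]
  simp_rw [gam_two_mul, gam_two_mul_add_one]

theorem stmt_15_general (n : ℕ) (μ : ℝ) (hμ : -(1 / 2) < μ) :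
    (∫ x : Fin n → ℝ,
        Real.exp (-∑ i, (x i) ^ 2) * (∏ i, |x i| ^ (2 * μ)) *
          ∏ i : Fin n, ∏ j ∈ Finset.Ioi i, (x i - x j) ^ 2) =
      (Nat.factorial n : ℝ) * ∏ k ∈ Finset.range n, gam μ k := by
  have hintegrand : ∀ x : Fin n → ℝ,
      exp (-∑ i, x i ^ 2) * (∏ i, |x i| ^ (2 * μ)) * ∏ i, ∏ j ∈ Ioi i, (x i - x j) ^ 2 =
        (of fun i j : Fin n => genHermiteWeight μ (x j) * x j ^ (i : ℕ)).det *
          (of fun i j : Fin n => x j ^ (i : ℕ)).det := by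
    intro x
    have hV : (of fun i j : Fin n => x j ^ (i : ℕ)).det = ∏ i, ∏ j ∈ Ioi i, (x j - x i) := by
      rw [← det_vandermonde, ← det_transpose]
      rfl
    have hW : (of fun i j : Fin n => genHermiteWeight μ (x j) * x j ^ (i : ℕ)).det =
        (∏ i, genHermiteWeight μ (x i)) * ∏ i, ∏ j ∈ Ioi i, (x j - x i) := by
      rw [← hV, ← det_mul_row]
      rfl
    have hsq : ∏ i, ∏ j ∈ Ioi i, (x i - x j) ^ 2 = (∏ i, ∏ j ∈ Ioi i, (x j - x i)) ^ 2 := by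
      rw [← prod_pow]
      exact prod_congr rfl fun i _ => by
        rw [← prod_pow]
        exact prod_congr rfl fun j _ => sub_sq_comm _ _
    rw [hW, hV, hsq, ← sum_neg_distrib, exp_sum]
    simp only [genHermiteWeight, prod_mul_distrib]
    ring
  have hint : ∀ i j : Fin n,
      Integrable fun t => genHermiteWeight μ t * t ^ (i : ℕ) * t ^ (j : ℕ) := fun i j => by
    simpa only [mul_assoc, ← pow_add] using integrable_genHermiteWeight_mul_pow hμ (i + j)
  simp_rw [hintegrand]
  rw [volume_pi, integral_det_mul_det _ _ hint, Fintype.card_fin]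
  simp_rw [mul_assoc, ← pow_add]
  rw [det_hankel_integral_genHermiteWeight_mul_pow hμ]

theorem stmt_15 (n : ℕ) (hn : 1 ≤ n) (μ : ℝ) (hμ : -(1 / 2) < μ) :
    (∫ x : Fin n → ℝ,
        Real.exp (-∑ i, (x i) ^ 2) * (∏ i, |x i| ^ (2 * μ)) *
          ∏ i : Fin n, ∏ j ∈ Finset.Ioi i, (x i - x j) ^ 2) =
      (Nat.factorial n : ℝ) * ∏ k ∈ Finset.range n, gam μ k :=
  stmt_15_general n μ hμ
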